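/- Let X ⊂ ℂ be a finite signal constellation with |X| = 2^m and let μ : X → {0,1}^m be a bijective binary labeling, with subconstellations X_b^i = {x ∈ X : i-th bit of μ(x) equals b}. Then for every snr > 0, the BICM mutual information I^bicm_X is differentiable at snr and its derivative satisfies d I^bicm_X(snr)/d snr = Σ_{i=1}^m (1/2) Σ_{b∈{0,1}} ( mmse_X(snr) − mmse_{X_b^i}(snr) ), where mmse_A denotes the minimum mean-squared error function of the constellation A. -/

import Mathlib

open MeasureTheory Finset

/-- Minimum mean-squared error in estimating the input, uniform on the finite
constellation `A ⊂ ℂ`, from the output of the complex Gaussian channel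
`y = √snr · x + z` with noise density `(1/π) exp(-|z|²)`. -/
noncomputable def mmse (A : Finset ℂ) (snr : ℝ) : ℝ :=
  (1 / (A.card : ℝ)) * ∑ a ∈ A, (‖a‖) ^ 2
  - (1 / (A.card : ℝ)) * ∑ a ∈ A, (1 / Real.pi) *
      ∫ z : ℂ, (‖
          ((∑ a' ∈ A, a' * (Real.exp (-(‖(Real.sqrt snr : ℂ) * (a - a') + z‖) ^ 2) : ℂ)) /
           (∑ a' ∈ A, (Real.exp (-(‖(Real.sqrt snr : ℂ) * (a - a') + z‖) ^ 2) : ℂ)))‖) ^ 2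
        * Real.exp (-(‖z‖) ^ 2)

/-- The subconstellation of points of `X` whose label has bit `b` in position `i`. -/
noncomputable def subconst (X : Finset ℂ) (m : ℕ) (μ : ℂ → (Fin m → Bool))
    (i : Fin m) (b : Bool) : Finset ℂ :=
  X.filter (fun x => μ x i = b)

/-- BICM mutual information of the constellation `X ⊂ ℂ`, `|X| = 2^m`, with
binary labeling `μ`, over the complex Gaussian channel `y = √snr · x + z`. -/
noncomputable def Ibicm (X : Finset ℂ) (m : ℕ) (μ : ℂ → (Fin m → Bool)) (snr : ℝ) : ℝ :=
  ∑ i : Fin m, (1 / 2 : ℝ) * ∑ b : Bool, (1 / (2 ^ (m - 1) : ℝ)) *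
    ∑ x ∈ subconst X m μ i b, (1 / Real.pi) *
      ∫ z : ℂ, Real.exp (-(‖z‖) ^ 2) *
        Real.log
          ((∑ x' ∈ subconst X m μ i b,
              Real.exp (-(‖(Real.sqrt snr : ℂ) * (x - x') + z‖) ^ 2)) /
           ((1 / 2 : ℝ) * ∑ x' ∈ X,
              Real.exp (-(‖(Real.sqrt snr : ℂ) * (x - x') + z‖) ^ 2)))

/-!
Write `p_t(y) = ∑_{a ∈ A} exp (-‖y - t a‖²)` for the unnormalised output density at amplitude
`t = √snr`. The functional `∑_a ∫ exp (-‖z‖²) log p_t(z + t a) dz` is differentiated under the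
integral sign in the noise variable `z`, where the Gaussian weight does not move. Translating the
`a`-th term back to the output variable `y = z + t a` and summing over `a`, the terms
`⟪y, a - a'⟫` of the derivative cancel in pairs, and what is left is `2t` times
`∑_a ∫ exp (-‖y - t a‖²) (‖E[X | y]‖² - ‖a‖²) dy`, that is `-2t π |A| mmse_A(t²)`: no integration
by parts is needed. The BICM information is the sum over the label bits of
`I(X; Y) - (I(X; Y | B_i = 0) + I(X; Y | B_i = 1)) / 2`, so its derivative follows by linearity.
-/

open Real
open scoped RealInnerProductSpace

section Gaussian

variable {V : Type*} [NormedAddCommGroup V] [InnerProductSpace ℝ V] [FiniteDimensional ℝ V]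
  [MeasurableSpace V] [BorelSpace V]

theorem integrable_exp_neg_mul_sq_norm {b : ℝ} (hb : 0 < b) :
    Integrable fun v : V => rexp (-b * ‖v‖ ^ 2) := by
  simpa [← Complex.ofReal_pow, ← Complex.ofReal_neg, ← Complex.ofReal_mul, Complex.norm_exp] using
    (GaussianFourier.integrable_cexp_neg_mul_sq_norm_add (V := V) (b := b)
      (by simpa using hb) 0 0).norm

theorem add_mul_mul_exp_neg_le (C₀ C₁ : ℝ) {r : ℝ} (hr : 0 ≤ r) :
    (C₀ + C₁ * r) * rexp (-r) ≤ (|C₀| + 2 * |C₁|) * rexp (-(1 / 2) * r) := by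
  set e := rexp (-(r / 2))
  have he : 0 < e := Real.exp_pos _
  have he1 : e ≤ 1 := Real.exp_le_one_iff.2 (by linarith)
  have hre : r * e ≤ 2 := by
    have h := Real.add_one_le_exp (r / 2)
    have h' : rexp (r / 2) * e = 1 := by rw [← Real.exp_add]; simp
    nlinarith
  have hsplit : rexp (-r) = e * rexp (-(1 / 2) * r) := by
    rw [← Real.exp_add]; ring_nf
  rw [hsplit, ← mul_assoc]
  refine mul_le_mul_of_nonneg_right ?_ (Real.exp_pos _).le
  nlinarith [le_abs_self C₀, le_abs_self C₁, abs_nonneg C₀, abs_nonneg C₁, mul_nonneg hr he.le]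

theorem integrable_exp_neg_sq_norm_mul {f : V → ℝ} (hf : AEStronglyMeasurable f) {C₀ C₁ : ℝ}
    (hbound : ∀ v, |f v| ≤ C₀ + C₁ * ‖v‖ ^ 2) :
    Integrable fun v => rexp (-‖v‖ ^ 2) * f v := by
  have hexp : Continuous fun v : V => rexp (-‖v‖ ^ 2) := by fun_prop
  refine ((integrable_exp_neg_mul_sq_norm (V := V) one_half_pos).const_mul
    (|C₀| + 2 * |C₁|)).mono' (hexp.aestronglyMeasurable.mul hf) (.of_forall fun v => ?_)
  rw [norm_mul, Real.norm_of_nonneg (Real.exp_pos _).le, mul_comm, Real.norm_eq_abs]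
  calc |f v| * rexp (-‖v‖ ^ 2) ≤ (C₀ + C₁ * ‖v‖ ^ 2) * rexp (-‖v‖ ^ 2) := by
        gcongr; exact hbound v
    _ ≤ _ := add_mul_mul_exp_neg_le C₀ C₁ (by positivity)

end Gaussian

theorem norm_centerMass_le {ι E : Type*} [NormedAddCommGroup E] [NormedSpace ℝ E]
    {s : Finset ι} {w : ι → ℝ} {z : ι → E} {C : ℝ} (hw₀ : ∀ i ∈ s, 0 ≤ w i)
    (hw : 0 < ∑ i ∈ s, w i) (hz : ∀ i ∈ s, ‖z i‖ ≤ C) : ‖s.centerMass w z‖ ≤ C := by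
  simpa using (convex_closedBall (0 : E) C).centerMass_mem hw₀ hw (by simpa using hz)

theorem sum_integral_mul_comp_add_eq {G ι : Type*} [MeasurableSpace G] [AddGroup G]
    [MeasurableAdd G] {μ : Measure G} [μ.IsAddRightInvariant] {s : Finset ι} {c : ι → G}
    {w : G → ℝ} {Φ Ψ : ι → G → ℝ}
    (hΦ : ∀ i ∈ s, Integrable (fun z => w z * Φ i (z + c i)) μ)
    (hΨ : ∀ i ∈ s, Integrable (fun z => w z * Ψ i (z + c i)) μ)
    (h : ∀ y, ∑ i ∈ s, w (y - c i) * Φ i y = ∑ i ∈ s, w (y - c i) * Ψ i y) :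
    ∑ i ∈ s, ∫ z, w z * Φ i (z + c i) ∂μ = ∑ i ∈ s, ∫ z, w z * Ψ i (z + c i) ∂μ := by
  have shift (F : G → ℝ) (g : G) : ∫ z, w z * F (z + g) ∂μ = ∫ y, w (y - g) * F y ∂μ := by
    simpa using integral_add_right_eq_self (μ := μ) (fun y => w (y - g) * F y) g
  have shift_integrable (F : G → ℝ) (g : G) (hF : Integrable (fun z => w z * F (z + g)) μ) :
      Integrable (fun y => w (y - g) * F y) μ := by
    simpa using hF.comp_sub_right g
  simp only [shift]
  rw [← integral_finsetSum _ fun i hi => shift_integrable _ _ (hΦ i hi),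
    ← integral_finsetSum _ fun i hi => shift_integrable _ _ (hΨ i hi)]
  exact congrArg _ (funext h)

namespace GaussianChannel

section Pointwise

variable {V : Type*} [NormedAddCommGroup V] [InnerProductSpace ℝ V]

noncomputable def likelihood (t : ℝ) (y a : V) : ℝ := rexp (-‖y - t • a‖ ^ 2)

variable (A : Finset V)

noncomputable def outputDensity (t : ℝ) (y : V) : ℝ := ∑ a ∈ A, likelihood t y a

noncomputable def condMean (t : ℝ) (y : V) : V := A.centerMass (likelihood t y) id

/-- The derivative of `s ↦ outputDensity A s (y + (s - t) • a)` at `s = t`. -/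
noncomputable def outputDensityDeriv (t : ℝ) (a y : V) : ℝ :=
  ∑ a' ∈ A, likelihood t y a' * -(2 * ⟪y - t • a', a - a'⟫)

variable {A}

theorem likelihood_pos (t : ℝ) (y a : V) : 0 < likelihood t y a := Real.exp_pos _

theorem likelihood_le_one (t : ℝ) (y a : V) : likelihood t y a ≤ 1 :=
  Real.exp_le_one_iff.2 (neg_nonpos.2 (by positivity))

theorem likelihood_add_smul_self (t : ℝ) (z a : V) :
    likelihood t (z + t • a) a = rexp (-‖z‖ ^ 2) := by
  simp [likelihood]

theorem continuous_likelihood (t : ℝ) (a : V) : Continuous fun y => likelihood t y a := by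
  unfold likelihood; fun_prop

theorem likelihood_le_outputDensity {a : V} (ha : a ∈ A) (t : ℝ) (y : V) :
    likelihood t y a ≤ outputDensity A t y :=
  Finset.single_le_sum (fun a' _ => (likelihood_pos t y a').le) ha

theorem outputDensity_pos {a : V} (ha : a ∈ A) (t : ℝ) (y : V) : 0 < outputDensity A t y :=
  (likelihood_pos t y a).trans_le (likelihood_le_outputDensity ha t y)

theorem outputDensity_le_card (t : ℝ) (y : V) : outputDensity A t y ≤ A.card := by
  unfold outputDensity
  simpa using Finset.sum_le_sum fun a (_ : a ∈ A) => likelihood_le_one t y a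

theorem continuous_outputDensity (t : ℝ) : Continuous (outputDensity A t) :=
  continuous_finsetSum _ fun a _ => continuous_likelihood t a

theorem abs_log_outputDensity_div_card_le {a : V} (ha : a ∈ A) (t : ℝ) (z : V) :
    |log (outputDensity A t (z + t • a) / A.card)| ≤ log A.card + ‖z‖ ^ 2 := by
  have hp := outputDensity_pos ha t (z + t • a)
  have hcard : (1 : ℝ) ≤ A.card := Nat.one_le_cast.2 (Finset.card_pos.2 ⟨a, ha⟩)
  have hlow : -‖z‖ ^ 2 ≤ log (outputDensity A t (z + t • a)) := by
    rw [← Real.log_exp (-‖z‖ ^ 2), ← likelihood_add_smul_self t z a]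
    exact Real.log_le_log (likelihood_pos _ _ _) (likelihood_le_outputDensity ha _ _)
  have hup : log (outputDensity A t (z + t • a)) ≤ log A.card :=
    Real.log_le_log hp (outputDensity_le_card t _)
  rw [Real.log_div hp.ne' (by positivity), abs_le]
  constructor <;> nlinarith [Real.log_nonneg hcard, sq_nonneg ‖z‖]

theorem continuous_log_outputDensity_div_card {a : V} (ha : a ∈ A) (t : ℝ) :
    Continuous fun z => log (outputDensity A t (z + t • a) / A.card) := by
  have hcard : (A.card : ℝ) ≠ 0 := by exact_mod_cast (Finset.card_pos.2 ⟨a, ha⟩).ne'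
  exact (((continuous_outputDensity t).comp (continuous_add_const (t • a))).div_const _).log
    fun z => div_ne_zero (outputDensity_pos ha t _).ne' hcard

theorem norm_condMean_le {a : V} (ha : a ∈ A) {K : ℝ} (hK : ∀ a ∈ A, ‖a‖ ≤ K) (t : ℝ)
    (y : V) : ‖condMean A t y‖ ≤ K :=
  norm_centerMass_le (fun a' _ => (likelihood_pos t y a').le) (outputDensity_pos ha t y) hK

theorem continuous_condMean {a : V} (ha : a ∈ A) (t : ℝ) : Continuous (condMean A t) := by
  change Continuous fun y => (outputDensity A t y)⁻¹ • ∑ a' ∈ A, likelihood t y a' • a'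
  exact ((continuous_outputDensity t).inv₀ fun y => (outputDensity_pos ha t y).ne').smul
    (continuous_finsetSum _ fun a _ => (continuous_likelihood t a).smul continuous_const)

theorem hasDerivAt_outputDensity_add_smul (t : ℝ) (a z : V) :
    HasDerivAt (fun s => outputDensity A s (z + s • a))
      (outputDensityDeriv A t a (z + t • a)) t := by
  refine HasDerivAt.fun_sum fun a' _ => ?_
  have hpath : HasDerivAt (fun s : ℝ => z + s • a - s • a') (a - a') t := by
    simpa using (((hasDerivAt_id t).smul_const a).const_add z).fun_sub
      ((hasDerivAt_id t).smul_const a')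
  simpa [likelihood, mul_comm] using hpath.norm_sq.neg.exp

theorem outputDensityDeriv_div_outputDensity (t : ℝ) (a y : V) :
    outputDensityDeriv A t a y / outputDensity A t y
      = A.centerMass (likelihood t y) fun a' => -(2 * ⟪y - t • a', a - a'⟫) := by
  simp [outputDensityDeriv, outputDensity, Finset.centerMass, div_eq_inv_mul]

theorem abs_outputDensityDeriv_div_le {a : V} (ha : a ∈ A) {K : ℝ} (hK : ∀ a ∈ A, ‖a‖ ≤ K)
    (t : ℝ) (z : V) :
    |outputDensityDeriv A t a (z + t • a) / outputDensity A t (z + t • a)|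
      ≤ (4 * K + 8 * |t| * K ^ 2) + 4 * K * ‖z‖ ^ 2 := by
  rw [outputDensityDeriv_div_outputDensity, ← Real.norm_eq_abs]
  refine norm_centerMass_le (fun a' _ => (likelihood_pos _ _ a').le)
    (outputDensity_pos ha t _) fun a' ha' => ?_
  have hK0 : 0 ≤ K := (norm_nonneg a).trans (hK a ha)
  have hdiff : ‖a - a'‖ ≤ 2 * K := (norm_sub_le a a').trans (by linarith [hK a ha, hK a' ha'])
  have hout : ‖z + t • a - t • a'‖ ≤ ‖z‖ + |t| * (2 * K) := by
    rw [add_sub_assoc, ← smul_sub]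
    refine (norm_add_le _ _).trans ?_
    rw [norm_smul, Real.norm_eq_abs]
    gcongr
  have hz : ‖z‖ ≤ 1 + ‖z‖ ^ 2 := by nlinarith [sq_nonneg (‖z‖ - 1)]
  rw [norm_neg, norm_mul, Real.norm_two]
  calc 2 * ‖⟪z + t • a - t • a', a - a'⟫‖ ≤ 2 * (‖z + t • a - t • a'‖ * ‖a - a'‖) := by
        gcongr; exact norm_inner_le_norm _ _
    _ ≤ 2 * ((‖z‖ + |t| * (2 * K)) * (2 * K)) := by gcongr
    _ ≤ _ := by nlinarith [abs_nonneg t]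

theorem continuous_outputDensityDeriv_div {a : V} (ha : a ∈ A) (t : ℝ) :
    Continuous fun z =>
      outputDensityDeriv A t a (z + t • a) / outputDensity A t (z + t • a) := by
  refine Continuous.div ?_ ((continuous_outputDensity t).comp (continuous_add_const _))
    fun z => (outputDensity_pos ha t _).ne'
  unfold outputDensityDeriv
  exact continuous_finsetSum _ fun a' _ =>
    ((continuous_likelihood t a').comp (continuous_add_const _)).mul (by fun_prop)

theorem sum_sum_mul_inner_sub_eq_zero (w : V → ℝ) (y : V) :
    ∑ a ∈ A, ∑ a' ∈ A, w a * w a' * ⟪y, a - a'⟫ = 0 := by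
  have hswap := Finset.sum_comm (s := A) (t := A) (f := fun a a' => w a * w a' * ⟪y, a - a'⟫)
  have hneg : ∑ a' ∈ A, ∑ a ∈ A, w a * w a' * ⟪y, a - a'⟫
      = -∑ a ∈ A, ∑ a' ∈ A, w a * w a' * ⟪y, a - a'⟫ := by
    rw [← Finset.sum_neg_distrib]
    refine Finset.sum_congr rfl fun a _ => ?_
    rw [← Finset.sum_neg_distrib]
    refine Finset.sum_congr rfl fun a' _ => ?_
    rw [← neg_sub a a', inner_neg_right]
    ring
  linarith

/-- The pointwise form of the I-MMSE relation: the terms `⟪y, a - a'⟫` cancel in pairs. -/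
theorem sum_likelihood_mul_outputDensityDeriv (t : ℝ) (y : V) :
    ∑ a ∈ A, likelihood t y a * outputDensityDeriv A t a y =
      2 * t * (‖∑ a ∈ A, likelihood t y a • a‖ ^ 2
        - outputDensity A t y * ∑ a ∈ A, likelihood t y a * ‖a‖ ^ 2) := by
  set L := likelihood t y
  have hN : ‖∑ a ∈ A, L a • a‖ ^ 2 = ∑ a ∈ A, ∑ a' ∈ A, L a * L a' * ⟪a, a'⟫ := by
    simp only [← real_inner_self_eq_norm_sq, sum_inner, inner_sum, inner_smul_left,
      inner_smul_right, Finset.mul_sum, RCLike.conj_to_real, mul_assoc]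
    rw [Finset.sum_comm]
    simp only [mul_left_comm]
  have hp : outputDensity A t y * ∑ a ∈ A, L a * ‖a‖ ^ 2
      = ∑ a ∈ A, ∑ a' ∈ A, L a * L a' * ‖a'‖ ^ 2 := by
    simp only [outputDensity, Finset.sum_mul_sum, L, mul_assoc]
  calc ∑ a ∈ A, L a * outputDensityDeriv A t a y
      = ∑ a ∈ A, ∑ a' ∈ A, (2 * t * (L a * L a' * ⟪a, a'⟫)
          - 2 * t * (L a * L a' * ‖a'‖ ^ 2) - 2 * (L a * L a' * ⟪y, a - a'⟫)) := by
        simp only [outputDensityDeriv, Finset.mul_sum]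
        refine Finset.sum_congr rfl fun a _ => Finset.sum_congr rfl fun a' _ => ?_
        simp only [inner_sub_left, inner_sub_right, real_inner_smul_left,
          real_inner_self_eq_norm_sq, real_inner_comm a a']
        ring
    _ = 2 * t * ∑ a ∈ A, ∑ a' ∈ A, L a * L a' * ⟪a, a'⟫
          - 2 * t * ∑ a ∈ A, ∑ a' ∈ A, L a * L a' * ‖a'‖ ^ 2
          - 2 * ∑ a ∈ A, ∑ a' ∈ A, L a * L a' * ⟪y, a - a'⟫ := by
        simp only [Finset.sum_sub_distrib, Finset.mul_sum]
    _ = _ := by rw [sum_sum_mul_inner_sub_eq_zero, hN, hp]; ring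

theorem sum_likelihood_mul_outputDensityDeriv_div (t : ℝ) (y : V) :
    ∑ a ∈ A, likelihood t y a * (outputDensityDeriv A t a y / outputDensity A t y)
      = ∑ a ∈ A, likelihood t y a * (2 * t * (‖condMean A t y‖ ^ 2 - ‖a‖ ^ 2)) := by
  rcases A.eq_empty_or_nonempty with rfl | ⟨a₀, ha₀⟩
  · simp
  have hp := outputDensity_pos ha₀ t y
  have hE : ‖condMean A t y‖ ^ 2
      = ‖∑ a ∈ A, likelihood t y a • a‖ ^ 2 / outputDensity A t y ^ 2 := by
    change ‖(outputDensity A t y)⁻¹ • ∑ a ∈ A, likelihood t y a • a‖ ^ 2 = _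
    rw [norm_smul, mul_pow, norm_inv, Real.norm_of_nonneg hp.le, inv_pow, inv_mul_eq_div]
  have hsum : ∑ a ∈ A, likelihood t y a * (2 * t * (‖condMean A t y‖ ^ 2 - ‖a‖ ^ 2))
      = 2 * t * (outputDensity A t y * ‖condMean A t y‖ ^ 2
        - ∑ a ∈ A, likelihood t y a * ‖a‖ ^ 2) := by
    rw [outputDensity, Finset.sum_mul, ← Finset.sum_sub_distrib, Finset.mul_sum]
    exact Finset.sum_congr rfl fun a _ => by ring
  simp only [← mul_div_assoc]
  rw [hsum, ← Finset.sum_div, sum_likelihood_mul_outputDensityDeriv, hE]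
  field_simp

end Pointwise

section Derivative

variable {V : Type*} [NormedAddCommGroup V] [InnerProductSpace ℝ V] [FiniteDimensional ℝ V]
  [MeasurableSpace V] [BorelSpace V] {A : Finset V} {a : V}

theorem integrable_exp_mul_log_outputDensity (ha : a ∈ A) (t : ℝ) :
    Integrable fun z => rexp (-‖z‖ ^ 2) * log (outputDensity A t (z + t • a) / A.card) := by
  refine integrable_exp_neg_sq_norm_mul (C₀ := log A.card) (C₁ := 1)
    (continuous_log_outputDensity_div_card ha t).aestronglyMeasurable fun z => ?_
  simpa using abs_log_outputDensity_div_card_le ha t z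

theorem integrable_exp_mul_sq_norm_condMean (ha : a ∈ A) {K : ℝ} (hK : ∀ a ∈ A, ‖a‖ ≤ K)
    (t : ℝ) : Integrable fun z => rexp (-‖z‖ ^ 2) * ‖condMean A t (z + t • a)‖ ^ 2 := by
  refine integrable_exp_neg_sq_norm_mul (C₀ := K ^ 2) (C₁ := 0)
    (((continuous_condMean ha t).comp (continuous_add_const _)).norm.pow 2).aestronglyMeasurable
    fun z => ?_
  rw [zero_mul, add_zero, abs_of_nonneg (by positivity)]
  exact pow_le_pow_left₀ (norm_nonneg _) (norm_condMean_le ha hK t _) 2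

theorem integrable_exp_mul_outputDensityDeriv_div (ha : a ∈ A) {K : ℝ}
    (hK : ∀ a ∈ A, ‖a‖ ≤ K) (t : ℝ) :
    Integrable fun z => rexp (-‖z‖ ^ 2) *
      (outputDensityDeriv A t a (z + t • a) / outputDensity A t (z + t • a)) :=
  integrable_exp_neg_sq_norm_mul (continuous_outputDensityDeriv_div ha t).aestronglyMeasurable
    (abs_outputDensityDeriv_div_le ha hK t)

theorem hasDerivAt_integral_log_outputDensity (ha : a ∈ A) {K : ℝ} (hK : ∀ a ∈ A, ‖a‖ ≤ K)
    (t₀ : ℝ) :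
    HasDerivAt (fun t => ∫ z, rexp (-‖z‖ ^ 2) * log (outputDensity A t (z + t • a) / A.card))
      (∫ z, rexp (-‖z‖ ^ 2) *
        (outputDensityDeriv A t₀ a (z + t₀ • a) / outputDensity A t₀ (z + t₀ • a))) t₀ := by
  have hK0 : 0 ≤ K := (norm_nonneg a).trans (hK a ha)
  have hbound (z : V) (t : ℝ) (ht : t ∈ Metric.ball t₀ 1) :
      ‖rexp (-‖z‖ ^ 2) * (outputDensityDeriv A t a (z + t • a) / outputDensity A t (z + t • a))‖
        ≤ rexp (-‖z‖ ^ 2) * ((4 * K + 8 * (|t₀| + 1) * K ^ 2) + 4 * K * ‖z‖ ^ 2) := by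
    have ht' : |t| ≤ |t₀| + 1 := by
      rw [Metric.mem_ball, Real.dist_eq] at ht
      linarith [abs_sub_abs_le_abs_sub t t₀]
    rw [norm_mul, Real.norm_of_nonneg (Real.exp_pos _).le, Real.norm_eq_abs]
    gcongr
    exact (abs_outputDensityDeriv_div_le ha hK t z).trans (by gcongr)
  refine (hasDerivAt_integral_of_dominated_loc_of_deriv_le (Metric.ball_mem_nhds t₀ one_pos)
    (.of_forall fun t => (integrable_exp_mul_log_outputDensity ha t).aestronglyMeasurable)
    (integrable_exp_mul_log_outputDensity ha t₀)
    (integrable_exp_mul_outputDensityDeriv_div ha hK t₀).aestronglyMeasurable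
    (.of_forall hbound) ?_ (.of_forall fun z t _ => ?_)).2
  · refine integrable_exp_neg_sq_norm_mul (C₀ := 4 * K + 8 * (|t₀| + 1) * K ^ 2) (C₁ := 4 * K)
      (by fun_prop) fun z => ?_
    rw [abs_of_nonneg (by positivity)]
  · have hcard : (A.card : ℝ) ≠ 0 := by exact_mod_cast (Finset.card_pos.2 ⟨a, ha⟩).ne'
    have hp := (outputDensity_pos ha t (z + t • a)).ne'
    refine ((((hasDerivAt_outputDensity_add_smul t a z).div_const (A.card : ℝ)).log
      (div_ne_zero hp hcard)).const_mul (rexp (-‖z‖ ^ 2))).congr_deriv ?_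
    rw [div_div_div_cancel_right₀ hcard]

variable (A) in
/-- The I-MMSE relation in the amplitude `t = √snr`. -/
theorem hasDerivAt_sum_integral_log_outputDensity (t : ℝ) :
    HasDerivAt
      (fun s => ∑ a ∈ A, ∫ z, rexp (-‖z‖ ^ 2) * log (outputDensity A s (z + s • a) / A.card))
      (2 * t * ∑ a ∈ A, ∫ z, rexp (-‖z‖ ^ 2) * (‖condMean A t (z + t • a)‖ ^ 2 - ‖a‖ ^ 2))
      t := by
  have hK : ∀ a ∈ A, ‖a‖ ≤ ∑ a ∈ A, ‖a‖ :=
    fun a ha => Finset.single_le_sum (fun a _ => norm_nonneg a) ha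
  refine (HasDerivAt.fun_sum fun a ha =>
    hasDerivAt_integral_log_outputDensity ha hK t).congr_deriv ?_
  have hconst (a : V) : 2 * t * ∫ z, rexp (-‖z‖ ^ 2) * (‖condMean A t (z + t • a)‖ ^ 2 - ‖a‖ ^ 2)
      = ∫ z, rexp (-‖z‖ ^ 2) * (2 * t * (‖condMean A t (z + t • a)‖ ^ 2 - ‖a‖ ^ 2)) := by
    rw [← integral_const_mul]; congr 1; ext z; ring
  rw [Finset.mul_sum, Finset.sum_congr rfl fun a _ => hconst a]
  refine sum_integral_mul_comp_add_eq (c := fun a => t • a)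
    (Φ := fun a y => outputDensityDeriv A t a y / outputDensity A t y)
    (Ψ := fun a y => 2 * t * (‖condMean A t y‖ ^ 2 - ‖a‖ ^ 2))
    (fun a ha => integrable_exp_mul_outputDensityDeriv_div ha hK t) (fun a ha => ?_)
    (sum_likelihood_mul_outputDensityDeriv_div t)
  refine (((integrable_exp_mul_sq_norm_condMean ha hK t).sub
    ((integrable_exp_neg_mul_sq_norm (V := V) one_pos).mul_const (‖a‖ ^ 2))).const_mul
    (2 * t)).congr (.of_forall fun z => ?_)
  simp only [Pi.sub_apply, neg_mul, one_mul]
  ring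

end Derivative

section Complex

theorem integral_exp_neg_sq_norm_complex : ∫ z : ℂ, rexp (-‖z‖ ^ 2) = π := by
  simpa using GaussianFourier.integral_rexp_neg_mul_sq_norm (V := ℂ) one_pos

theorem likelihood_add_smul (t : ℝ) (z a a' : ℂ) :
    likelihood t (z + t • a) a' = rexp (-‖(t : ℂ) * (a - a') + z‖ ^ 2) := by
  simp only [likelihood, Complex.real_smul]
  ring_nf

theorem outputDensity_add_smul (A : Finset ℂ) (t : ℝ) (z a : ℂ) :
    outputDensity A t (z + t • a) = ∑ a' ∈ A, rexp (-‖(t : ℂ) * (a - a') + z‖ ^ 2) :=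
  Finset.sum_congr rfl fun a' _ => likelihood_add_smul t z a a'

theorem condMean_add_smul (A : Finset ℂ) (t : ℝ) (z a : ℂ) :
    condMean A t (z + t • a)
      = (∑ a' ∈ A, a' * (rexp (-‖(t : ℂ) * (a - a') + z‖ ^ 2) : ℂ))
        / ∑ a' ∈ A, (rexp (-‖(t : ℂ) * (a - a') + z‖ ^ 2) : ℂ) := by
  change (outputDensity A t (z + t • a))⁻¹ • ∑ a' ∈ A, likelihood t (z + t • a) a' • a' = _
  simp only [outputDensity, likelihood_add_smul]
  simp only [Complex.real_smul, ← Complex.ofReal_sum, Complex.ofReal_inv, mul_comm,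
    div_eq_inv_mul]

theorem mmse_eq_integral (A : Finset ℂ) (snr : ℝ) :
    mmse A snr = -(1 / (π * A.card)) *
      ∑ a ∈ A, ∫ z, rexp (-‖z‖ ^ 2) * (‖condMean A √snr (z + √snr • a)‖ ^ 2 - ‖a‖ ^ 2) := by
  have hK : ∀ a ∈ A, ‖a‖ ≤ ∑ a ∈ A, ‖a‖ :=
    fun a ha => Finset.single_le_sum (fun a _ => norm_nonneg a) ha
  have hsplit : ∀ a ∈ A,
      ∫ z, rexp (-‖z‖ ^ 2) * (‖condMean A √snr (z + √snr • a)‖ ^ 2 - ‖a‖ ^ 2)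
        = (∫ z, ‖condMean A √snr (z + √snr • a)‖ ^ 2 * rexp (-‖z‖ ^ 2)) - ‖a‖ ^ 2 * π := by
    intro a ha
    have hE := (integrable_exp_mul_sq_norm_condMean ha hK √snr).congr
      (.of_forall fun z => mul_comm _ _)
    have hg := (integrable_exp_neg_mul_sq_norm (V := ℂ) one_pos).const_mul (‖a‖ ^ 2)
    simp only [neg_mul, one_mul] at hg
    rw [← integral_exp_neg_sq_norm_complex, ← integral_const_mul, ← integral_sub hE hg]
    congr 1; ext z; ring
  rw [Finset.sum_congr rfl hsplit, mmse]
  simp only [condMean_add_smul, Finset.sum_sub_distrib, ← Finset.mul_sum, ← Finset.sum_mul]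
  field_simp
  ring

/-- `h(Y) - log π` for the output `Y = √snr X + Z` of the channel with `X` uniform on `A`; the
coded-modulation mutual information is `outputEntropy A snr - 1`. -/
noncomputable def outputEntropy (A : Finset ℂ) (snr : ℝ) : ℝ :=
  -(1 / A.card) * ∑ a ∈ A, (1 / π) *
    ∫ z, rexp (-‖z‖ ^ 2) * log (outputDensity A √snr (z + √snr • a) / A.card)

theorem hasDerivAt_outputEntropy (A : Finset ℂ) {snr : ℝ} (hsnr : 0 < snr) :
    HasDerivAt (outputEntropy A) (mmse A snr) snr := by
  have hfun : outputEntropy A = fun s => -(1 / (π * A.card)) *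
      ∑ a ∈ A, ∫ z, rexp (-‖z‖ ^ 2) * log (outputDensity A √s (z + √s • a) / A.card) := by
    ext s
    rw [outputEntropy, ← Finset.mul_sum, ← mul_assoc]
    ring
  rw [hfun, mmse_eq_integral]
  refine (((hasDerivAt_sum_integral_log_outputDensity A √snr).comp snr
    (Real.hasDerivAt_sqrt hsnr.ne')).const_mul _).congr_deriv ?_
  have : √snr ≠ 0 := (Real.sqrt_pos.2 hsnr).ne'
  field_simp

theorem integral_exp_mul_log_ratio_eq {A B : Finset ℂ} {x : ℂ} (hxA : x ∈ A) (hxB : x ∈ B)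
    (hcard : B.card = 2 * A.card) (t : ℝ) :
    ∫ z, rexp (-‖z‖ ^ 2) * log ((∑ x' ∈ A, rexp (-‖(t : ℂ) * (x - x') + z‖ ^ 2)) /
        ((1 / 2 : ℝ) * ∑ x' ∈ B, rexp (-‖(t : ℂ) * (x - x') + z‖ ^ 2)))
      = (∫ z, rexp (-‖z‖ ^ 2) * log (outputDensity A t (z + t • x) / A.card))
        - ∫ z, rexp (-‖z‖ ^ 2) * log (outputDensity B t (z + t • x) / B.card) := by
  rw [← integral_sub (integrable_exp_mul_log_outputDensity hxA t)
    (integrable_exp_mul_log_outputDensity hxB t)]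
  congr 1; ext z
  have hA := outputDensity_pos hxA t (z + t • x)
  have hB := outputDensity_pos hxB t (z + t • x)
  have hcA : (0 : ℝ) < A.card := by exact_mod_cast Finset.card_pos.2 ⟨x, hxA⟩
  push_cast [hcard]
  rw [← mul_sub, ← Real.log_div (div_pos hA hcA).ne' (div_pos hB (by linarith)).ne',
    ← outputDensity_add_smul, ← outputDensity_add_smul]
  congr 2
  field_simp

end Complex

end GaussianChannel

open GaussianChannel

theorem card_eq_two_pow_of_bijOn {α : Type*} {X : Finset α} {m : ℕ} {μ : α → Fin m → Bool}
    (hμ : Set.BijOn μ X Set.univ) : X.card = 2 ^ m := by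
  simpa using Finset.card_nbij (t := Finset.univ) μ (fun _ _ => by simp) hμ.injOn
    (by simpa using hμ.surjOn)

section Labeling

variable {X : Finset ℂ} {m : ℕ} {μ : ℂ → Fin m → Bool}

theorem card_subconst (hμ : Set.BijOn μ X Set.univ) (i : Fin m) (b : Bool) :
    (subconst X m μ i b).card = 2 ^ (m - 1) := by
  classical
  have hlabels :=
    Fintype.card_filter_piFinset_const_eq_of_mem Finset.univ i (Finset.mem_univ b)
  simp only [Fintype.piFinset_univ, Finset.card_univ, Fintype.card_bool, Fintype.card_fin]
    at hlabels
  rw [← hlabels]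
  refine Finset.card_nbij μ (fun x hx => ?_) (hμ.injOn.mono fun x hx => ?_) fun f hf => ?_
  · simp_all [subconst]
  · simp_all [subconst]
  · obtain ⟨x, hx, rfl⟩ := hμ.surjOn (Set.mem_univ f)
    exact ⟨x, by simp_all [subconst], rfl⟩

/-- The chain rule `I(B_i; Y) = I(X; Y) - I(X; Y | B_i)` for each label bit. -/
theorem Ibicm_eq_sum_outputEntropy (hμ : Set.BijOn μ X Set.univ) :
    Ibicm X m μ = fun snr => ∑ i, (1 / 2 : ℝ) *
      ∑ b, (outputEntropy X snr - outputEntropy (subconst X m μ i b) snr) := by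
  ext snr
  refine Finset.sum_congr rfl fun i _ => congrArg _ ?_
  set ℓ : Finset ℂ → ℂ → ℝ := fun A x =>
    (1 / π) * ∫ z, rexp (-‖z‖ ^ 2) * log (outputDensity A √snr (z + √snr • x) / A.card)
  have hH (A : Finset ℂ) : outputEntropy A snr = -(1 / A.card) * ∑ x ∈ A, ℓ A x := rfl
  have hX := card_eq_two_pow_of_bijOn hμ
  have hXb := card_subconst hμ i
  have hpow : 2 ^ m = 2 * 2 ^ (m - 1) := by rw [← pow_succ', Nat.sub_add_cancel i.pos]
  have hterm (b : Bool) (x : ℂ) (hx : x ∈ subconst X m μ i b) :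
      (1 / π) * ∫ z, rexp (-‖z‖ ^ 2) *
        log ((∑ x' ∈ subconst X m μ i b, rexp (-‖(√snr : ℂ) * (x - x') + z‖ ^ 2)) /
          ((1 / 2 : ℝ) * ∑ x' ∈ X, rexp (-‖(√snr : ℂ) * (x - x') + z‖ ^ 2)))
        = ℓ (subconst X m μ i b) x - ℓ X x := by
    rw [integral_exp_mul_log_ratio_eq hx (Finset.filter_subset _ _ hx)
      (by rw [hX, hXb, hpow]), mul_sub]
  simp only [Finset.sum_congr rfl (hterm _), hH, hXb, hX]
  rw [← Finset.sum_fiberwise X (fun x => μ x i) (ℓ X)]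
  simp only [subconst, Fintype.sum_bool, Finset.sum_sub_distrib]
  push_cast [hpow]
  field_simp
  ring

end Labeling

theorem Ibicm_hasDerivAt_general (X : Finset ℂ) (m : ℕ) (μ : ℂ → (Fin m → Bool))
    (hμ : Set.BijOn μ (X : Set ℂ) Set.univ)
    (snr : ℝ) (hsnr : 0 < snr) :
    HasDerivAt (Ibicm X m μ)
      (∑ i : Fin m, (1 / 2 : ℝ) * ∑ b : Bool,
        (mmse X snr - mmse (subconst X m μ i b) snr)) snr := by
  rw [Ibicm_eq_sum_outputEntropy hμ]
  exact HasDerivAt.fun_sum fun i _ => (HasDerivAt.fun_sum fun b _ =>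
    (hasDerivAt_outputEntropy X hsnr).sub (hasDerivAt_outputEntropy _ hsnr)).const_mul _

/-- For a constellation `X ⊂ ℂ` with `|X| = 2^m` and a bijective binary labeling
`μ : X → {0,1}^m`, the BICM mutual information is differentiable at every
`snr > 0` with derivative
`Σ_{i=1}^m (1/2) Σ_{b∈{0,1}} (mmse_X(snr) − mmse_{X_b^i}(snr))`. -/
theorem Ibicm_hasDerivAt (X : Finset ℂ) (m : ℕ) (μ : ℂ → (Fin m → Bool))
    (hcard : X.card = 2 ^ m) (hμ : Set.BijOn μ (X : Set ℂ) Set.univ)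
    (snr : ℝ) (hsnr : 0 < snr) :
    HasDerivAt (Ibicm X m μ)
      (∑ i : Fin m, (1 / 2 : ℝ) * ∑ b : Bool,
        (mmse X snr - mmse (subconst X m μ i b) snr)) snr :=
  Ibicm_hasDerivAt_general X m μ hμ snr hsnr
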